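/- Define f(k) = (log(195k) + 8)²/(π(k-1)) for real k > 1, and g(k) = (log(50k) + 1.4)²/(π(k-1)). Then for all real k > 1000: 1/f(k) ≤ (3/4 + 1/f(k-75)) / (1 + g(k)/π). -/

import Mathlib

noncomputable def fBound (k : ℝ) : ℝ := (Real.log (195 * k) + 8) ^ 2 / (Real.pi * (k - 1))

noncomputable def gBound (k : ℝ) : ℝ := (Real.log (50 * k) + 1.4) ^ 2 / (Real.pi * (k - 1))

/-!
Multiplying out the denominator `1 + g(k)/π` and using `log (195 (k - 75)) ≤ log (195 k)`, the claim
reduces to `75 π² + N² ≤ (3/4) π L²` with `N = log (50 k) + 1.4` and `L = log (195 k) + 8`.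
Since `L = N + 6.6 + log 3.9 ≥ N + 7.91`, this quadratic inequality in `N` holds as soon as
`N ≥ 11.79`, i.e. for `50 k ≥ 2 ^ 15`.
-/

open Real

lemma one_div_fBound (k : ℝ) : 1 / fBound k = π * (k - 1) / (log (195 * k) + 8) ^ 2 :=
  one_div_div _ _

lemma gBound_div_pi (k : ℝ) : gBound k / π = (log (50 * k) + 1.4) ^ 2 / (π ^ 2 * (k - 1)) := by
  rw [gBound, div_div]
  ring

lemma log_50_mul_ge {k : ℝ} (hk : 1000 < k) : 10.39 ≤ log (50 * k) := by
  have h : (2 : ℝ) ^ 15 ≤ 50 * k := by linarith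
  have := log_le_log (by positivity) h
  rw [log_pow] at this
  push_cast at this
  linarith [log_two_gt_d9]

lemma log_3_9_gt : 1.31 < log 3.9 := by
  have h : log ((2 : ℝ) ^ 19) ≤ log ((3.9 : ℝ) ^ 10) := log_le_log (by positivity) (by norm_num)
  rw [log_pow, log_pow] at h
  push_cast at h
  linarith [log_two_gt_d9]

lemma log_195_mul {k : ℝ} (hk : 0 < k) : log (195 * k) = log 3.9 + log (50 * k) := by
  rw [← log_mul (by norm_num) (by positivity)]
  ring_nf

lemma seventy_five_pi_sq_add_sq_le {N : ℝ} (hN : 11.79 ≤ N) :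
    75 * π ^ 2 + N ^ 2 ≤ 3 / 4 * (π * (N + 7.91) ^ 2) := by
  have hπ : π ^ 2 < 9.87 := by nlinarith [pi_lt_d6, pi_pos]
  nlinarith [pi_gt_d6, sq_nonneg (N - 11.79)]

lemma mul_div_sq_le_of_le_mul_sq {p k L M N : ℝ} (hp : 0 < p) (hk : 76 ≤ k) (hM : 0 < M)
    (hML : M ≤ L) (hkey : 75 * p ^ 2 + N ^ 2 ≤ 3 / 4 * (p * L ^ 2)) :
    p * (k - 1) / L ^ 2 ≤ (3 / 4 + p * (k - 76) / M ^ 2) / (1 + N ^ 2 / (p ^ 2 * (k - 1))) := by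
  have hk1 : 0 < k - 1 := by linarith
  have hL : 0 < L := hM.trans_le hML
  rw [le_div_iff₀ (by positivity)]
  calc p * (k - 1) / L ^ 2 * (1 + N ^ 2 / (p ^ 2 * (k - 1)))
      = p * (k - 76) / L ^ 2 + (75 * p ^ 2 + N ^ 2) / (p * L ^ 2) := by
        field_simp
        ring
    _ ≤ p * (k - 76) / M ^ 2 + 3 / 4 := by
        refine add_le_add ?_ (div_le_of_le_mul₀ (by positivity) (by norm_num) hkey)
        gcongr
    _ = 3 / 4 + p * (k - 76) / M ^ 2 := add_comm _ _

/-- The key numerical inequality in the induction step of Theorem 1.3-3. -/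
theorem induction_step_inequality (k : ℝ) (hk : 1000 < k) :
    1 / fBound k ≤ (3 / 4 + 1 / fBound (k - 75)) / (1 + gBound k / Real.pi) := by
  have hN := log_50_mul_ge hk
  have hL : log (50 * k) + 1.4 + 7.91 ≤ log (195 * k) + 8 := by
    rw [log_195_mul (by linarith)]
    linarith [log_3_9_gt]
  have hM : 0 < log (195 * (k - 75)) + 8 := by
    linarith [log_nonneg (show (1 : ℝ) ≤ 195 * (k - 75) by linarith)]
  have hML : log (195 * (k - 75)) + 8 ≤ log (195 * k) + 8 := by
    gcongr <;> linarith
  rw [one_div_fBound, one_div_fBound, gBound_div_pi, show k - 75 - 1 = k - 76 by ring]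
  refine mul_div_sq_le_of_le_mul_sq pi_pos (by linarith) hM hML ?_
  calc 75 * π ^ 2 + (log (50 * k) + 1.4) ^ 2
      ≤ 3 / 4 * (π * (log (50 * k) + 1.4 + 7.91) ^ 2) := seventy_five_pi_sq_add_sq_le (by linarith)
    _ ≤ 3 / 4 * (π * (log (195 * k) + 8) ^ 2) := by gcongr
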